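/- Let μ_t^h = X(t,·;h)#( e^{∫₀ᵗ w(s, X(s,·;h)) ds} μ₀ ) with X(t,y;h) the flow of b + h b₁, where b, b₁ ∈ C⁰([0,∞); C^{1+α}(ℝ^d)) and w ∈ C^{1+α}([0,∞)×ℝ^d), and μ₀ a probability measure. Then for each fixed t ≥ 0, the map h ↦ μ_t^h from [−1/2,1/2] into (C^{1+α}(ℝ^d))* is Lipschitz: ‖μ_t^{h₁} − μ_t^{h₂}‖_{(C^{1+α})*} ≤ C(t) |h₁ − h₂| for a constant C(t) independent of h₁, h₂. -/

import Mathlib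

open MeasureTheory Metric Filter
open scoped NNReal ENNReal BigOperators Topology

noncomputable section

/-- Euclidean space ℝ^d. -/
abbrev Ed (d : ℕ) : Type := EuclideanSpace ℝ (Fin d)

/-- The α-Hölder seminorm of the gradient map `g = fderiv ℝ f`. -/
def holderSemi {d : ℕ} (α : ℝ) (g : Ed d → (Ed d →L[ℝ] ℝ)) : ℝ :=
  ⨆ x, ⨆ y, ‖g x - g y‖ / dist x y ^ α

/-- The C^{1+α} norm: sup|f| + sup|∇f| + α-Hölder seminorm of ∇f. -/
def c1aNorm {d : ℕ} (α : ℝ) (f : Ed d → ℝ) : ℝ :=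
  (⨆ x, |f x|) + (⨆ x, ‖fderiv ℝ f x‖) + holderSemi α (fderiv ℝ f)

/-- Membership in C^{1+α}(ℝ^d): bounded C¹ function with bounded, α-Hölder gradient. -/
def MemC1a {d : ℕ} (α : ℝ) (f : Ed d → ℝ) : Prop :=
  ContDiff ℝ 1 f ∧ BddAbove (Set.range fun x => |f x|) ∧
    BddAbove (Set.range fun x => ‖fderiv ℝ f x‖) ∧
    ∃ C : ℝ≥0, HolderWith C α.toNNReal (fderiv ℝ f)

/-- The dual norm on (C^{1+α}(ℝ^d))*, applied to a (not necessarily linear)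
functional `L` on functions: sup of |L f| over ‖f‖_{C^{1+α}} ≤ 1. -/
def dualNorm {d : ℕ} (α : ℝ) (L : (Ed d → ℝ) → ℝ) : ℝ :=
  sSup {r | ∃ f, MemC1a α f ∧ c1aNorm α f ≤ 1 ∧ r = |L f|}

/-- b ∈ C⁰([0,∞); C^{1+α}(ℝ^d)): continuous in time with values that are bounded C¹
vector fields, with bounded α-Hölder space derivative, uniformly in time. -/
def VecTimeC1a {d : ℕ} (α : ℝ) (b : ℝ → Ed d → Ed d) : Prop :=
  Continuous (Function.uncurry b) ∧ (∀ t, ContDiff ℝ 1 (b t)) ∧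
    (∃ M : ℝ, ∀ t x, ‖b t x‖ + ‖fderiv ℝ (b t) x‖ ≤ M) ∧
    ∃ C : ℝ≥0, ∀ t, HolderWith C α.toNNReal (fderiv ℝ (b t))

/-- w ∈ C^{1+α}([0,∞)×ℝ^d), encoded as: jointly continuous, C¹ and bounded in space
with bounded α-Hölder spatial gradient, uniformly in time. -/
def ScalTimeC1a {d : ℕ} (α : ℝ) (w : ℝ → Ed d → ℝ) : Prop :=
  Continuous (Function.uncurry w) ∧ (∀ t, ContDiff ℝ 1 (w t)) ∧
    (∃ M : ℝ, ∀ t x, |w t x| + ‖fderiv ℝ (w t) x‖ ≤ M) ∧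
    ∃ C : ℝ≥0, ∀ t, HolderWith C α.toNNReal (fderiv ℝ (w t))

/-- The perturbed solution μ_t^h = X(t,·;h)#( e^{∫₀ᵗ w(s,X(s,·;h)) ds} μ₀ ). -/
def muSol {d : ℕ} (X : ℝ → Ed d → ℝ → Ed d) (w : ℝ → Ed d → ℝ)
    (μ₀ : Measure (Ed d)) (t h : ℝ) : Measure (Ed d) :=
  Measure.map (fun y => X t y h)
    (μ₀.withDensity fun y =>
      ENNReal.ofReal (Real.exp (∫ s in (0:ℝ)..t, w s (X s y h))))

/-! The flows for two parameters solve ODEs whose fields differ by at most `‖b₁‖∞ |h₁ - h₂|`,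
so Grönwall's inequality bounds `|X(s, y; h₁) - X(s, y; h₂)|` by `C(t) |h₁ - h₂|` uniformly for
`s ∈ [0, t]`. Since `w` is Lipschitz in space, the exponents of the two weights differ by
`C(t) |h₁ - h₂|` as well, and `exp` is Lipschitz on the range `(-∞, ‖w‖∞ t]` of these exponents.
Testing the pushed-forward measures against `f` with `‖f‖_{C^{1+α}} ≤ 1`, which is bounded by `1`
and `1`-Lipschitz, gives the estimate. -/

open Set

theorem exists_norm_le_and_lipschitzWith {ι E F : Type*} [NormedAddCommGroup E] [NormedSpace ℝ E]
    [NormedAddCommGroup F] [NormedSpace ℝ F] {g : ι → E → F}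
    (hg : ∀ i, ContDiff ℝ 1 (g i)) (hM : ∃ M : ℝ, ∀ i x, ‖g i x‖ + ‖fderiv ℝ (g i) x‖ ≤ M) :
    ∃ M : ℝ≥0, ∀ i, (∀ x, ‖g i x‖ ≤ M) ∧ LipschitzWith M (g i) := by
  obtain ⟨M, hM⟩ := hM
  refine ⟨M.toNNReal, fun i => ⟨fun x => ?_, ?_⟩⟩
  · exact (le_add_of_nonneg_right (norm_nonneg _)).trans ((hM i x).trans (Real.le_coe_toNNReal M))
  · refine lipschitzWith_of_nnnorm_fderiv_le ((hg i).differentiable one_ne_zero) fun x => ?_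
    rw [← NNReal.coe_le_coe, coe_nnnorm]
    exact (le_add_of_nonneg_left (norm_nonneg _)).trans ((hM i x).trans (Real.le_coe_toNNReal M))

theorem lipschitzWith_add_smul {X F : Type*} [PseudoEMetricSpace X] [SeminormedAddCommGroup F]
    [NormedSpace ℝ F] {f g : X → F} {Kf Kg : ℝ≥0} (hf : LipschitzWith Kf f)
    (hg : LipschitzWith Kg g) {c : ℝ} (hc : |c| ≤ 1) :
    LipschitzWith (Kf + Kg) fun x => f x + c • g x := by
  have hc' : ‖c‖₊ ≤ 1 := by rw [← NNReal.coe_le_coe, coe_nnnorm, Real.norm_eq_abs]; exact hc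
  exact (hf.add ((lipschitzWith_smul c).comp hg)).weaken
    (by gcongr; exact mul_le_of_le_one_left Kg.2 hc')

theorem gronwallBound_δ0 (K ε x : ℝ) : gronwallBound 0 K ε x = ε * gronwallBound 0 K 1 x := by
  by_cases hK : K = 0
  · simp [gronwallBound_K0, hK]
  · simp only [gronwallBound_of_K_ne_0 hK]
    ring

section Gronwall

variable {E : Type*} [NormedAddCommGroup E] [NormedSpace ℝ E]

theorem dist_le_gronwallBound_of_hasDerivAt {v u : ℝ → E → E} {K : ℝ≥0} {f g : ℝ → E}
    {δ ε t : ℝ} (hv : ∀ s, LipschitzWith K (v s)) (huv : ∀ s x, dist (u s x) (v s x) ≤ ε)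
    (hf : ∀ s, HasDerivAt f (v s (f s)) s) (hg : ∀ s, HasDerivAt g (u s (g s)) s)
    (h0 : dist (f 0) (g 0) ≤ δ) :
    ∀ s ∈ Icc 0 t, dist (f s) (g s) ≤ gronwallBound δ K ε t := by
  have hcont : ∀ {γ : ℝ → E} {γ' : ℝ → E}, (∀ s, HasDerivAt γ (γ' s) s) → Continuous γ :=
    fun hγ => continuous_iff_continuousAt.2 fun s => (hγ s).continuousAt
  intro s hs
  have hs' : s ∈ Icc 0 s := ⟨hs.1, le_rfl⟩
  have := dist_le_of_approx_trajectories_ODE (εf := 0) hv (hcont hf).continuousOn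
    (fun s _ => (hf s).hasDerivWithinAt) (fun s _ => (dist_self _).le) (hcont hg).continuousOn
    (fun s _ => (hg s).hasDerivWithinAt) (fun s _ => huv s _) h0 s hs'
  rw [zero_add, sub_zero] at this
  exact this.trans (gronwallBound_mono (dist_nonneg.trans h0)
    (dist_nonneg.trans (huv 0 0)) K.2 hs.2)

theorem dist_le_gronwallBound_of_hasDerivAt_add_smul {b b₁ : ℝ → E → E} {Mb M₁ : ℝ≥0}
    (hb : ∀ s, LipschitzWith Mb (b s)) (hb₁ : ∀ s, LipschitzWith M₁ (b₁ s))
    (hb₁_le : ∀ s x, ‖b₁ s x‖ ≤ M₁) {h₁ h₂ : ℝ} (hh₁ : |h₁| ≤ 1) {f g : ℝ → E}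
    (hf : ∀ s, HasDerivAt f (b s (f s) + h₁ • b₁ s (f s)) s)
    (hg : ∀ s, HasDerivAt g (b s (g s) + h₂ • b₁ s (g s)) s) {t : ℝ} :
    ∀ s ∈ Icc 0 t,
      dist (f s) (g s) ≤ gronwallBound (dist (f 0) (g 0)) (Mb + M₁) (M₁ * |h₁ - h₂|) t := by
  refine dist_le_gronwallBound_of_hasDerivAt (v := fun s x => b s x + h₁ • b₁ s x)
    (u := fun s x => b s x + h₂ • b₁ s x)
    (fun s => lipschitzWith_add_smul (hb s) (hb₁ s) hh₁) (fun s x => ?_) hf hg le_rfl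
  rw [dist_eq_norm, add_sub_add_left_eq_sub, ← sub_smul, norm_smul, Real.norm_eq_abs,
    abs_sub_comm, mul_comm]
  exact mul_le_mul_of_nonneg_right (hb₁_le s x) (abs_nonneg _)

theorem exists_lipschitz_flow_add_smul {b b₁ : ℝ → E → E} {Mb M₁ : ℝ≥0}
    (hb : ∀ s, LipschitzWith Mb (b s)) (hb₁ : ∀ s, LipschitzWith M₁ (b₁ s))
    (hb₁_le : ∀ s x, ‖b₁ s x‖ ≤ M₁) {H : Set ℝ} (hH : ∀ h ∈ H, |h| ≤ 1) {X : ℝ → E → ℝ → E}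
    (hX0 : ∀ y h, X 0 y h = y)
    (hX : ∀ y, ∀ h ∈ H, ∀ s, HasDerivAt (X · y h) (b s (X s y h) + h • b₁ s (X s y h)) s)
    (t : ℝ) :
    ∃ (L : ℝ≥0) (C : ℝ), (∀ h ∈ H, ∀ s ∈ Icc 0 t, LipschitzWith L (X s · h)) ∧
      ∀ y, ∀ h₁ ∈ H, ∀ h₂ ∈ H, ∀ s ∈ Icc 0 t, dist (X s y h₁) (X s y h₂) ≤ C * |h₁ - h₂| := by
  have hdist : ∀ y y', ∀ h₁ ∈ H, ∀ h₂ ∈ H, ∀ s ∈ Icc 0 t, dist (X s y h₁) (X s y' h₂) ≤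
      gronwallBound (dist y y') (Mb + M₁) (M₁ * |h₁ - h₂|) t := fun y y' h₁ hh₁ h₂ hh₂ => by
    simpa only [hX0] using dist_le_gronwallBound_of_hasDerivAt_add_smul hb hb₁ hb₁_le
      (hH h₁ hh₁) (hX y h₁ hh₁) (hX y' h₂ hh₂)
  refine ⟨Real.toNNReal (Real.exp ((Mb + M₁) * t)), M₁ * gronwallBound 0 (Mb + M₁) 1 t,
    fun h hh s hs => LipschitzWith.of_dist_le' fun y y' => ?_,
    fun y h₁ hh₁ h₂ hh₂ s hs => ?_⟩
  · simpa [gronwallBound_ε0, mul_comm] using hdist y y' h hh h hh s hs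
  · have := hdist y y h₁ hh₁ h₂ hh₂ s hs
    rw [dist_self, gronwallBound_δ0] at this
    exact this.trans_eq (by ring)

end Gronwall

theorem dist_intervalIntegral_comp_le {E : Type*} [NormedAddCommGroup E] {g : ℝ → E → ℝ}
    {M : ℝ≥0} {γ₁ γ₂ : ℝ → E} {t δ : ℝ} (hg : Continuous (Function.uncurry g))
    (hgL : ∀ s, LipschitzWith M (g s)) (hγ₁ : Continuous γ₁) (hγ₂ : Continuous γ₂)
    (ht : 0 ≤ t) (hδ : ∀ s ∈ Icc 0 t, dist (γ₁ s) (γ₂ s) ≤ δ) :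
    dist (∫ s in (0:ℝ)..t, g s (γ₁ s)) (∫ s in (0:ℝ)..t, g s (γ₂ s)) ≤ M * δ * t := by
  have hint : ∀ {γ : ℝ → E}, Continuous γ → IntervalIntegrable (fun s => g s (γ s)) volume 0 t :=
    fun hγ => (hg.comp (continuous_id.prodMk hγ)).intervalIntegrable 0 t
  rw [dist_eq_norm, ← intervalIntegral.integral_sub (hint hγ₁) (hint hγ₂)]
  refine (intervalIntegral.norm_integral_le_of_norm_le_const (C := M * δ) fun s hs => ?_).trans_eq
    (by rw [sub_zero, abs_of_nonneg ht])
  rw [uIoc_of_le ht] at hs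
  rw [← dist_eq_norm]
  exact ((hgL s).dist_le_mul _ _).trans
    (mul_le_mul_of_nonneg_left (hδ s (Ioc_subset_Icc_self hs)) M.2)

theorem LipschitzWith.intervalIntegral_comp {Y E : Type*} [PseudoMetricSpace Y]
    [NormedAddCommGroup E] {g : ℝ → E → ℝ} {M L : ℝ≥0} {Φ : ℝ → Y → E} {t : ℝ}
    (hg : Continuous (Function.uncurry g)) (hgL : ∀ s, LipschitzWith M (g s))
    (hΦ : ∀ y, Continuous (Φ · y)) (hΦL : ∀ s ∈ Icc 0 t, LipschitzWith L (Φ s)) (ht : 0 ≤ t) :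
    LipschitzWith (M * L * t.toNNReal) fun y => ∫ s in (0:ℝ)..t, g s (Φ s y) :=
  LipschitzWith.of_dist_le_mul fun y y' =>
    (dist_intervalIntegral_comp_le hg hgL (hΦ y) (hΦ y') ht
      fun s hs => (hΦL s hs).dist_le_mul y y').trans_eq
    (by rw [NNReal.coe_mul, NNReal.coe_mul, Real.coe_toNNReal _ ht]; ring)

theorem abs_exp_sub_exp_le {a b c : ℝ} (ha : a ≤ c) (hb : b ≤ c) :
    |Real.exp a - Real.exp b| ≤ Real.exp c * |a - b| := by
  wlog hab : b ≤ a with H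
  · rw [abs_sub_comm, abs_sub_comm a b]
    exact H hb ha (le_of_not_ge hab)
  rw [abs_of_nonneg (sub_nonneg.2 (Real.exp_le_exp.2 hab)), abs_of_nonneg (sub_nonneg.2 hab)]
  -- `exp b ≥ exp a (1 + (b - a))`
  have key : Real.exp a - Real.exp b ≤ Real.exp a * (a - b) := by
    have h1 : Real.exp a * Real.exp (b - a) = Real.exp b := by rw [← Real.exp_add]; ring_nf
    nlinarith [Real.add_one_le_exp (b - a), Real.exp_pos a]
  exact key.trans (mul_le_mul_of_nonneg_right (Real.exp_le_exp.2 ha) (sub_nonneg.2 hab))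

theorem abs_exp_mul_sub_exp_mul_le {a b c u v : ℝ} (ha : a ≤ c) (hb : b ≤ c) (hv : |v| ≤ 1) :
    |Real.exp a * u - Real.exp b * v| ≤ Real.exp c * (|u - v| + |a - b|) := by
  calc |Real.exp a * u - Real.exp b * v|
      = |Real.exp a * (u - v) + (Real.exp a - Real.exp b) * v| := by congr 1; ring
    _ ≤ Real.exp a * |u - v| + |Real.exp a - Real.exp b| * |v| :=
        (abs_add_le _ _).trans_eq (by rw [abs_mul, abs_mul, abs_of_pos (Real.exp_pos a)])
    _ ≤ Real.exp c * |u - v| + Real.exp c * |a - b| * 1 := by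
        gcongr
        exact abs_exp_sub_exp_le ha hb
    _ = Real.exp c * (|u - v| + |a - b|) := by ring

section WeightedPushforward

variable {Ω F : Type*} [MeasurableSpace Ω] [MeasurableSpace F] {μ : Measure Ω}

theorem integral_map_withDensity_exp {φ : Ω → F} {W : Ω → ℝ} {f : F → ℝ} (hφ : Measurable φ)
    (hW : Measurable W) (hf : Measurable f) :
    ∫ x, f x ∂(Measure.map φ (μ.withDensity fun y => ENNReal.ofReal (Real.exp (W y)))) =
      ∫ y, Real.exp (W y) * f (φ y) ∂μ := by
  rw [integral_map hφ.aemeasurable hf.aestronglyMeasurable,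
    integral_withDensity_eq_integral_toReal_smul (hW.exp.ennreal_ofReal)
      (Eventually.of_forall fun _ => ENNReal.ofReal_lt_top)]
  simp only [ENNReal.toReal_ofReal (Real.exp_pos _).le, smul_eq_mul]

theorem abs_integral_exp_mul_sub_le [IsProbabilityMeasure μ] [PseudoMetricSpace F]
    [OpensMeasurableSpace F] {φ₁ φ₂ : Ω → F} {W₁ W₂ : Ω → ℝ} {f : F → ℝ} {A δX δW : ℝ}
    (hφ₁ : Measurable φ₁) (hφ₂ : Measurable φ₂) (hW₁ : Measurable W₁) (hW₂ : Measurable W₂)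
    (hf : ∀ x, |f x| ≤ 1) (hfL : LipschitzWith 1 f) (hW₁A : ∀ y, W₁ y ≤ A) (hW₂A : ∀ y, W₂ y ≤ A)
    (hδX : ∀ y, dist (φ₁ y) (φ₂ y) ≤ δX) (hδW : ∀ y, |W₁ y - W₂ y| ≤ δW) :
    |∫ y, Real.exp (W₁ y) * f (φ₁ y) ∂μ - ∫ y, Real.exp (W₂ y) * f (φ₂ y) ∂μ| ≤
      Real.exp A * (δX + δW) := by
  have hint : ∀ {φ : Ω → F} {W : Ω → ℝ}, Measurable φ → Measurable W → (∀ y, W y ≤ A) →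
      Integrable (fun y => Real.exp (W y) * f (φ y)) μ := fun hφ hW hWA =>
    (integrable_const (Real.exp A)).mono'
      (hW.exp.mul (hfL.continuous.measurable.comp hφ)).aestronglyMeasurable
      (Eventually.of_forall fun y => by
        rw [Real.norm_eq_abs, abs_mul, abs_of_pos (Real.exp_pos _)]
        exact (mul_le_mul (Real.exp_le_exp.2 (hWA y)) (hf _) (abs_nonneg _)
          (Real.exp_pos _).le).trans_eq (mul_one _))
  rw [← integral_sub (hint hφ₁ hW₁ hW₁A) (hint hφ₂ hW₂ hW₂A), ← Real.norm_eq_abs]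
  refine (norm_integral_le_of_norm_le_const (C := Real.exp A * (δX + δW))
    (Eventually.of_forall fun y => ?_)).trans_eq (by simp)
  refine (abs_exp_mul_sub_exp_mul_le (hW₁A y) (hW₂A y) (hf _)).trans ?_
  gcongr
  · simpa [Real.dist_eq] using (hfL.dist_le_mul _ _).trans (by simpa using hδX y)
  · exact hδW y

end WeightedPushforward

section HolderDual

variable {d : ℕ} {α : ℝ}

theorem holderSemi_nonneg (g : Ed d → (Ed d →L[ℝ] ℝ)) : 0 ≤ holderSemi α g :=
  Real.iSup_nonneg fun _ => Real.iSup_nonneg fun _ =>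
    div_nonneg (norm_nonneg _) (Real.rpow_nonneg dist_nonneg _)

theorem MemC1a.abs_le_c1aNorm {f : Ed d → ℝ} (hf : MemC1a α f) (x : Ed d) :
    |f x| ≤ c1aNorm α f := by
  have : 0 ≤ ⨆ x, ‖fderiv ℝ f x‖ := Real.iSup_nonneg fun _ => norm_nonneg _
  have := holderSemi_nonneg (α := α) (fderiv ℝ f)
  have := le_ciSup hf.2.1 x
  rw [c1aNorm]
  linarith

theorem MemC1a.norm_fderiv_le_c1aNorm {f : Ed d → ℝ} (hf : MemC1a α f) (x : Ed d) :
    ‖fderiv ℝ f x‖ ≤ c1aNorm α f := by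
  have : 0 ≤ ⨆ x : Ed d, |f x| := Real.iSup_nonneg fun _ => abs_nonneg _
  have := holderSemi_nonneg (α := α) (fderiv ℝ f)
  have := le_ciSup hf.2.2.1 x
  rw [c1aNorm]
  linarith

theorem MemC1a.lipschitzWith_one {f : Ed d → ℝ} (hf : MemC1a α f) (hnorm : c1aNorm α f ≤ 1) :
    LipschitzWith 1 f :=
  lipschitzWith_of_nnnorm_fderiv_le (hf.1.differentiable one_ne_zero) fun x => by
    rw [← NNReal.coe_le_coe, coe_nnnorm, NNReal.coe_one]
    exact (hf.norm_fderiv_le_c1aNorm x).trans hnorm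

theorem dualNorm_le {L : (Ed d → ℝ) → ℝ} {B : ℝ} (hB : 0 ≤ B)
    (h : ∀ f, MemC1a α f → c1aNorm α f ≤ 1 → |L f| ≤ B) : dualNorm α L ≤ B :=
  Real.sSup_le (by rintro r ⟨f, hf, hnorm, rfl⟩; exact h f hf hnorm) hB

theorem dualNorm_integral_map_withDensity_exp_sub_le {Ω : Type*} [MeasurableSpace Ω]
    {μ : Measure Ω} [IsProbabilityMeasure μ] {φ₁ φ₂ : Ω → Ed d} {W₁ W₂ : Ω → ℝ} {A δX δW : ℝ}
    (hφ₁ : Measurable φ₁) (hφ₂ : Measurable φ₂) (hW₁ : Measurable W₁) (hW₂ : Measurable W₂)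
    (hW₁A : ∀ y, W₁ y ≤ A) (hW₂A : ∀ y, W₂ y ≤ A)
    (hδX : ∀ y, dist (φ₁ y) (φ₂ y) ≤ δX) (hδW : ∀ y, |W₁ y - W₂ y| ≤ δW) :
    dualNorm α (fun f =>
        (∫ x, f x ∂(Measure.map φ₁ (μ.withDensity fun y => ENNReal.ofReal (Real.exp (W₁ y))))) -
          ∫ x, f x ∂(Measure.map φ₂ (μ.withDensity fun y => ENNReal.ofReal (Real.exp (W₂ y))))) ≤
      Real.exp A * (δX + δW) := by
  obtain ⟨y⟩ := nonempty_of_isProbabilityMeasure μ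
  refine dualNorm_le (mul_nonneg (Real.exp_pos _).le
    (add_nonneg (dist_nonneg.trans (hδX y)) ((abs_nonneg _).trans (hδW y)))) fun f hf hnorm => ?_
  have hfL := hf.lipschitzWith_one hnorm
  rw [integral_map_withDensity_exp hφ₁ hW₁ hfL.continuous.measurable,
    integral_map_withDensity_exp hφ₂ hW₂ hfL.continuous.measurable]
  exact abs_integral_exp_mul_sub_le hφ₁ hφ₂ hW₁ hW₂ (fun x => (hf.abs_le_c1aNorm x).trans hnorm)
    hfL hW₁A hW₂A hδX hδW

theorem VecTimeC1a.exists_norm_le_and_lipschitzWith {b : ℝ → Ed d → Ed d}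
    (hb : VecTimeC1a α b) : ∃ M : ℝ≥0, ∀ t, (∀ x, ‖b t x‖ ≤ M) ∧ LipschitzWith M (b t) :=
  _root_.exists_norm_le_and_lipschitzWith hb.2.1 hb.2.2.1

theorem ScalTimeC1a.exists_abs_le_and_lipschitzWith {w : ℝ → Ed d → ℝ}
    (hw : ScalTimeC1a α w) : ∃ M : ℝ≥0, ∀ t, (∀ x, |w t x| ≤ M) ∧ LipschitzWith M (w t) :=
  _root_.exists_norm_le_and_lipschitzWith hw.2.1 hw.2.2.1

end HolderDual

theorem solution_lipschitz_in_parameter_general (d : ℕ) (α : ℝ)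
    (b b₁ : ℝ → Ed d → Ed d) (w : ℝ → Ed d → ℝ)
    (hb : VecTimeC1a α b) (hb₁ : VecTimeC1a α b₁) (hw : ScalTimeC1a α w)
    (μ₀ : Measure (Ed d)) [IsProbabilityMeasure μ₀]
    (X : ℝ → Ed d → ℝ → Ed d)
    (hX0 : ∀ y h, X 0 y h = y)
    (hXode : ∀ (y : Ed d), ∀ h ∈ Set.Icc (-(1:ℝ)/2) (1/2), ∀ t : ℝ,
      HasDerivAt (fun τ => X τ y h) (b t (X t y h) + h • b₁ t (X t y h)) t) :
    ∀ t ≥ (0:ℝ), ∃ C : ℝ,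
      ∀ h₁ ∈ Set.Icc (-(1:ℝ)/2) (1/2), ∀ h₂ ∈ Set.Icc (-(1:ℝ)/2) (1/2),
      dualNorm α (fun f =>
          (∫ x, f x ∂(muSol X w μ₀ t h₁)) - ∫ x, f x ∂(muSol X w μ₀ t h₂)) ≤
        C * |h₁ - h₂| := by
  intro t ht
  obtain ⟨Mb, hbL⟩ := hb.exists_norm_le_and_lipschitzWith
  obtain ⟨M₁, hb₁L⟩ := hb₁.exists_norm_le_and_lipschitzWith
  obtain ⟨Mw, hwL⟩ := hw.exists_abs_le_and_lipschitzWith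
  obtain ⟨L, C, hXL, hXh⟩ := exists_lipschitz_flow_add_smul (fun s => (hbL s).2)
    (fun s => (hb₁L s).2) (fun s => (hb₁L s).1)
    (fun h hh => abs_le.2 ⟨by linarith [hh.1], by linarith [hh.2]⟩) hX0 hXode t
  have hXcont : ∀ y, ∀ h ∈ Icc (-(1:ℝ)/2) (1/2), Continuous (X · y h) := fun y h hh =>
    continuous_iff_continuousAt.2 fun s => (hXode y h hh s).continuousAt
  set W := fun h y => ∫ s in (0:ℝ)..t, w s (X s y h)
  have hWL : ∀ h ∈ Icc (-(1:ℝ)/2) (1/2), LipschitzWith (Mw * L * t.toNNReal) (W h) :=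
    fun h hh => .intervalIntegral_comp hw.1 (fun s => (hwL s).2) (hXcont · h hh) (hXL h hh) ht
  have hWh : ∀ y, ∀ h₁ ∈ Icc (-(1:ℝ)/2) (1/2), ∀ h₂ ∈ Icc (-(1:ℝ)/2) (1/2),
      |W h₁ y - W h₂ y| ≤ Mw * (C * |h₁ - h₂|) * t := fun y h₁ hh₁ h₂ hh₂ =>
    dist_intervalIntegral_comp_le hw.1 (fun s => (hwL s).2) (hXcont y h₁ hh₁) (hXcont y h₂ hh₂)
      ht (hXh y h₁ hh₁ h₂ hh₂)
  have hWle : ∀ h y, W h y ≤ Mw * t := fun h y => by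
    have := intervalIntegral.norm_integral_le_of_norm_le_const (a := 0) (b := t)
      (f := fun s => w s (X s y h)) fun s _ => (Real.norm_eq_abs _).trans_le ((hwL s).1 _)
    rw [sub_zero, abs_of_nonneg ht] at this
    exact (le_abs_self _).trans this
  refine ⟨Real.exp (Mw * t) * C * (1 + Mw * t), fun h₁ hh₁ h₂ hh₂ => ?_⟩
  refine (dualNorm_integral_map_withDensity_exp_sub_le
    (hXL h₁ hh₁ t ⟨ht, le_rfl⟩).continuous.measurable
    (hXL h₂ hh₂ t ⟨ht, le_rfl⟩).continuous.measurable (hWL h₁ hh₁).continuous.measurable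
    (hWL h₂ hh₂).continuous.measurable (hWle h₁) (hWle h₂)
    (fun y => hXh y h₁ hh₁ h₂ hh₂ t ⟨ht, le_rfl⟩) (fun y => hWh y h₁ hh₁ h₂ hh₂)).trans_eq ?_
  ring

/-- Lipschitz dependence of the solution on the perturbation parameter in the dual norm
of C^{1+α}(ℝ^d): for fixed t ≥ 0, ‖μ_t^{h₁} − μ_t^{h₂}‖_{(C^{1+α})*} ≤ C(t)|h₁ − h₂|. -/
theorem solution_lipschitz_in_parameter (d : ℕ) (α : ℝ) (hα : 0 < α) (hα1 : α ≤ 1)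
    (b b₁ : ℝ → Ed d → Ed d) (w : ℝ → Ed d → ℝ)
    (hb : VecTimeC1a α b) (hb₁ : VecTimeC1a α b₁) (hw : ScalTimeC1a α w)
    (μ₀ : Measure (Ed d)) [IsProbabilityMeasure μ₀]
    (X : ℝ → Ed d → ℝ → Ed d)
    (hX0 : ∀ y h, X 0 y h = y)
    (hXode : ∀ (y : Ed d), ∀ h ∈ Set.Icc (-(1:ℝ)/2) (1/2), ∀ t : ℝ,
      HasDerivAt (fun τ => X τ y h) (b t (X t y h) + h • b₁ t (X t y h)) t) :
    ∀ t ≥ (0:ℝ), ∃ C : ℝ,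
      ∀ h₁ ∈ Set.Icc (-(1:ℝ)/2) (1/2), ∀ h₂ ∈ Set.Icc (-(1:ℝ)/2) (1/2),
      dualNorm α (fun f =>
          (∫ x, f x ∂(muSol X w μ₀ t h₁)) - ∫ x, f x ∂(muSol X w μ₀ t h₂)) ≤
        C * |h₁ - h₂| :=
  solution_lipschitz_in_parameter_general d α b b₁ w hb hb₁ hw μ₀ X hX0 hXode
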